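/- (Theorem 2, part 2) The decision regions Φ_{B_1} and Φ_{B_2} are mirror images with respect to the line p1 = p2: (p1,p2) ∈ Φ_{B_1} if and only if (p2,p1) ∈ Φ_{B_2}. -/

import Mathlib

open Set

noncomputable section

/-- Belief update for an unobserved channel: `T p = λ0 + (λ1 - λ0) p`. -/
def Tr (l0 l1 p : ℝ) : ℝ := l0 + (l1 - l0) * p

/-- The four power allocation actions. -/
inductive PAct
  | Bb  -- balanced
  | B1  -- bet on channel 1
  | B2  -- bet on channel 2
  | Br  -- conservative

/-- Action-value functional `W_a` computed from a function `W`. -/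
def Q (l0 l1 β Rl Rh Cl Ch : ℝ) (W : ℝ → ℝ → ℝ) : PAct → ℝ → ℝ → ℝ
  | PAct.Bb => fun p1 p2 =>
      (p1 + p2) * (Rl + Cl) - 2 * Cl +
        β * ((1 - p1) * (1 - p2) * W l0 l0 + p1 * p2 * W l1 l1 +
             p1 * (1 - p2) * W l1 l0 + (1 - p1) * p2 * W l0 l1)
  | PAct.B1 => fun p1 p2 =>
      (Rh + Ch) * p1 - Ch +
        β * (p1 * W l1 (Tr l0 l1 p2) + (1 - p1) * W l0 (Tr l0 l1 p2))
  | PAct.B2 => fun p1 p2 =>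
      (Rh + Ch) * p2 - Ch +
        β * (p2 * W (Tr l0 l1 p1) l1 + (1 - p2) * W (Tr l0 l1 p1) l0)
  | PAct.Br => fun p1 p2 => β * W (Tr l0 l1 p1) (Tr l0 l1 p2)

/-- The Bellman operator `L W = max over the four actions of W_a`. -/
def Bop (l0 l1 β Rl Rh Cl Ch : ℝ) (W : ℝ → ℝ → ℝ) (p1 p2 : ℝ) : ℝ :=
  max (max (Q l0 l1 β Rl Rh Cl Ch W PAct.Bb p1 p2)
           (Q l0 l1 β Rl Rh Cl Ch W PAct.B1 p1 p2))
      (max (Q l0 l1 β Rl Rh Cl Ch W PAct.B2 p1 p2)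
           (Q l0 l1 β Rl Rh Cl Ch W PAct.Br p1 p2))

/-- Boundedness on the belief space `[0,1] × [0,1]`. -/
def BddOnSq (W : ℝ → ℝ → ℝ) : Prop :=
  ∃ M : ℝ, ∀ p1 ∈ Icc (0:ℝ) 1, ∀ p2 ∈ Icc (0:ℝ) 1, |W p1 p2| ≤ M

/-- Being a fixed point of the Bellman operator on the belief space. -/
def IsFix (l0 l1 β Rl Rh Cl Ch : ℝ) (V : ℝ → ℝ → ℝ) : Prop :=
  ∀ p1 ∈ Icc (0:ℝ) 1, ∀ p2 ∈ Icc (0:ℝ) 1,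
    V p1 p2 = Bop l0 l1 β Rl Rh Cl Ch V p1 p2

/-- Decision region of action `a`: beliefs where action `a` achieves the value. -/
def Phi (l0 l1 β Rl Rh Cl Ch : ℝ) (V : ℝ → ℝ → ℝ) (a : PAct) : Set (ℝ × ℝ) :=
  {p : ℝ × ℝ | p.1 ∈ Icc (0:ℝ) 1 ∧ p.2 ∈ Icc (0:ℝ) 1 ∧
    V p.1 p.2 = Q l0 l1 β Rl Rh Cl Ch V a p.1 p.2}

/-!
Transposing the arguments of a function exchanges the roles of `B₁` and `B₂` in the Bellman
operator, so the transpose of a bounded fixed point is again a bounded fixed point. Since the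
Bellman operator is a `β`-contraction in the sup norm on the belief square, its bounded fixed
point is unique, hence symmetric, and then `V = V_{B₁}` at `(p₁, p₂)` exactly when
`V = V_{B₂}` at `(p₂, p₁)`.
-/

open Function

lemma abs_convex_combo_le {c t x y : ℝ} (ht0 : 0 ≤ t) (ht1 : t ≤ 1)
    (hx : |x| ≤ c) (hy : |y| ≤ c) : |t * x + (1 - t) * y| ≤ c := by
  calc |t * x + (1 - t) * y| ≤ t * |x| + (1 - t) * |y| := by
        simpa only [abs_mul, abs_of_nonneg ht0, abs_of_nonneg (sub_nonneg.2 ht1)]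
          using abs_add_le (t * x) ((1 - t) * y)
    _ ≤ t * c + (1 - t) * c := by gcongr
    _ = c := by ring

lemma eq_zero_of_abs_le_pow_mul {β C x : ℝ} (hβ0 : 0 ≤ β) (hβ1 : β < 1)
    (h : ∀ n : ℕ, |x| ≤ β ^ n * C) : x = 0 := by
  have hlim : Filter.Tendsto (fun n : ℕ => β ^ n * C) Filter.atTop (nhds 0) := by
    simpa using (tendsto_pow_atTop_nhds_zero_of_lt_one hβ0 hβ1).mul_const C
  exact abs_nonpos_iff.mp (ge_of_tendsto' hlim h)

lemma Tr_mem_Icc {l0 l1 p : ℝ} (hl0 : l0 ∈ Icc (0:ℝ) 1) (hl1 : l1 ∈ Icc (0:ℝ) 1)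
    (hp : p ∈ Icc (0:ℝ) 1) : Tr l0 l1 p ∈ Icc (0:ℝ) 1 := by
  have h : Tr l0 l1 p = (1 - p) * l0 + p * l1 := by unfold Tr; ring
  obtain ⟨hp0, hp1⟩ := hp
  rw [h]
  constructor <;> nlinarith [hl0.1, hl0.2, hl1.1, hl1.2]

def PAct.swap : PAct → PAct
  | PAct.Bb => PAct.Bb
  | PAct.B1 => PAct.B2
  | PAct.B2 => PAct.B1
  | PAct.Br => PAct.Br

section Bellman

variable {l0 l1 β Rl Rh Cl Ch : ℝ}

lemma Q_swap (W : ℝ → ℝ → ℝ) (a : PAct) (p q : ℝ) :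
    Q l0 l1 β Rl Rh Cl Ch (swap W) a p q = Q l0 l1 β Rl Rh Cl Ch W a.swap q p := by
  cases a <;> simp only [Q, PAct.swap, swap]
  ring

lemma Bop_swap (W : ℝ → ℝ → ℝ) (p q : ℝ) :
    Bop l0 l1 β Rl Rh Cl Ch (swap W) p q = Bop l0 l1 β Rl Rh Cl Ch W q p := by
  simp only [Bop, Q_swap, PAct.swap]
  exact max_max_max_comm _ _ _ _

lemma IsFix.swap {V : ℝ → ℝ → ℝ} (hV : IsFix l0 l1 β Rl Rh Cl Ch V) :
    IsFix l0 l1 β Rl Rh Cl Ch (swap V) :=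
  fun p hp q hq => (hV q hq p hp).trans (Bop_swap V p q).symm

lemma BddOnSq.swap {V : ℝ → ℝ → ℝ} (hV : BddOnSq V) : BddOnSq (swap V) := by
  obtain ⟨M, hM⟩ := hV
  exact ⟨M, fun p hp q hq => hM q hq p hp⟩

lemma Q_congr {V W : ℝ → ℝ → ℝ} (hl0 : l0 ∈ Icc (0:ℝ) 1) (hl1 : l1 ∈ Icc (0:ℝ) 1)
    (h : ∀ x ∈ Icc (0:ℝ) 1, ∀ y ∈ Icc (0:ℝ) 1, V x y = W x y) (a : PAct)
    {p q : ℝ} (hp : p ∈ Icc (0:ℝ) 1) (hq : q ∈ Icc (0:ℝ) 1) :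
    Q l0 l1 β Rl Rh Cl Ch V a p q = Q l0 l1 β Rl Rh Cl Ch W a p q := by
  have hTp := Tr_mem_Icc hl0 hl1 hp
  have hTq := Tr_mem_Icc hl0 hl1 hq
  cases a <;>
    simp only [Q, h _ hl0 _ hl0, h _ hl0 _ hl1, h _ hl1 _ hl0, h _ hl1 _ hl1,
      h _ hl0 _ hTq, h _ hl1 _ hTq, h _ hTp _ hl0, h _ hTp _ hl1, h _ hTp _ hTq]

lemma abs_Q_sub_Q_le {V W : ℝ → ℝ → ℝ} {c : ℝ} (hβ0 : 0 ≤ β)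
    (hl0 : l0 ∈ Icc (0:ℝ) 1) (hl1 : l1 ∈ Icc (0:ℝ) 1)
    (hc : ∀ x ∈ Icc (0:ℝ) 1, ∀ y ∈ Icc (0:ℝ) 1, |V x y - W x y| ≤ c) (a : PAct)
    {p q : ℝ} (hp : p ∈ Icc (0:ℝ) 1) (hq : q ∈ Icc (0:ℝ) 1) :
    |Q l0 l1 β Rl Rh Cl Ch V a p q - Q l0 l1 β Rl Rh Cl Ch W a p q| ≤ β * c := by
  have hTp := Tr_mem_Icc hl0 hl1 hp
  have hTq := Tr_mem_Icc hl0 hl1 hq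
  set d : ℝ → ℝ → ℝ := fun x y => V x y - W x y
  -- each action value is a reward plus `β` times an average of `W` over the next beliefs
  suffices ∃ X, |X| ≤ c ∧
      Q l0 l1 β Rl Rh Cl Ch V a p q - Q l0 l1 β Rl Rh Cl Ch W a p q = β * X by
    obtain ⟨X, hX, e⟩ := this
    rw [e, abs_mul, abs_of_nonneg hβ0]
    exact mul_le_mul_of_nonneg_left hX hβ0
  cases a
  · refine ⟨p * (q * d l1 l1 + (1 - q) * d l1 l0) + (1 - p) * (q * d l0 l1 + (1 - q) * d l0 l0),
      ?_, by simp only [Q, d]; ring⟩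
    exact abs_convex_combo_le hp.1 hp.2
      (abs_convex_combo_le hq.1 hq.2 (hc _ hl1 _ hl1) (hc _ hl1 _ hl0))
      (abs_convex_combo_le hq.1 hq.2 (hc _ hl0 _ hl1) (hc _ hl0 _ hl0))
  · exact ⟨p * d l1 (Tr l0 l1 q) + (1 - p) * d l0 (Tr l0 l1 q),
      abs_convex_combo_le hp.1 hp.2 (hc _ hl1 _ hTq) (hc _ hl0 _ hTq),
      by simp only [Q, d]; ring⟩
  · exact ⟨q * d (Tr l0 l1 p) l1 + (1 - q) * d (Tr l0 l1 p) l0,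
      abs_convex_combo_le hq.1 hq.2 (hc _ hTp _ hl1) (hc _ hTp _ hl0),
      by simp only [Q, d]; ring⟩
  · exact ⟨d (Tr l0 l1 p) (Tr l0 l1 q), hc _ hTp _ hTq, by simp only [Q, d]; ring⟩

lemma abs_Bop_sub_Bop_le {V W : ℝ → ℝ → ℝ} {c : ℝ} (hβ0 : 0 ≤ β)
    (hl0 : l0 ∈ Icc (0:ℝ) 1) (hl1 : l1 ∈ Icc (0:ℝ) 1)
    (hc : ∀ x ∈ Icc (0:ℝ) 1, ∀ y ∈ Icc (0:ℝ) 1, |V x y - W x y| ≤ c)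
    {p q : ℝ} (hp : p ∈ Icc (0:ℝ) 1) (hq : q ∈ Icc (0:ℝ) 1) :
    |Bop l0 l1 β Rl Rh Cl Ch V p q - Bop l0 l1 β Rl Rh Cl Ch W p q| ≤ β * c := by
  have hQ := fun a => abs_Q_sub_Q_le (Rl := Rl) (Rh := Rh) (Cl := Cl) (Ch := Ch)
    hβ0 hl0 hl1 hc a hp hq
  exact (abs_max_sub_max_le_max _ _ _ _).trans <| max_le
    ((abs_max_sub_max_le_max _ _ _ _).trans (max_le (hQ _) (hQ _)))
    ((abs_max_sub_max_le_max _ _ _ _).trans (max_le (hQ _) (hQ _)))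

lemma IsFix.eq_of_bddOnSq {V W : ℝ → ℝ → ℝ} (hβ0 : 0 ≤ β) (hβ1 : β < 1)
    (hl0 : l0 ∈ Icc (0:ℝ) 1) (hl1 : l1 ∈ Icc (0:ℝ) 1)
    (hV : IsFix l0 l1 β Rl Rh Cl Ch V) (hW : IsFix l0 l1 β Rl Rh Cl Ch W)
    (hVb : BddOnSq V) (hWb : BddOnSq W) :
    ∀ x ∈ Icc (0:ℝ) 1, ∀ y ∈ Icc (0:ℝ) 1, V x y = W x y := by
  obtain ⟨M, hM⟩ := hVb
  obtain ⟨N, hN⟩ := hWb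
  have hbound : ∀ n : ℕ, ∀ x ∈ Icc (0:ℝ) 1, ∀ y ∈ Icc (0:ℝ) 1,
      |V x y - W x y| ≤ β ^ n * (M + N) := by
    intro n
    induction n with
    | zero =>
      intro x hx y hy
      simpa using (abs_sub _ _).trans (add_le_add (hM x hx y hy) (hN x hx y hy))
    | succ n ih =>
      intro x hx y hy
      rw [hV x hx y hy, hW x hx y hy, pow_succ', mul_assoc]
      exact abs_Bop_sub_Bop_le hβ0 hl0 hl1 ih hx hy
  intro x hx y hy
  exact sub_eq_zero.mp (eq_zero_of_abs_le_pow_mul hβ0 hβ1 fun n => hbound n x hx y hy)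

lemma mem_Phi_swap_iff {V : ℝ → ℝ → ℝ} (hl0 : l0 ∈ Icc (0:ℝ) 1) (hl1 : l1 ∈ Icc (0:ℝ) 1)
    (hsymm : ∀ x ∈ Icc (0:ℝ) 1, ∀ y ∈ Icc (0:ℝ) 1, V x y = V y x) (a : PAct) (p q : ℝ) :
    (p, q) ∈ Phi l0 l1 β Rl Rh Cl Ch V a ↔ (q, p) ∈ Phi l0 l1 β Rl Rh Cl Ch V a.swap := by
  have hQ : ∀ {p q}, p ∈ Icc (0:ℝ) 1 → q ∈ Icc (0:ℝ) 1 →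
      Q l0 l1 β Rl Rh Cl Ch V a p q = Q l0 l1 β Rl Rh Cl Ch V a.swap q p := fun hp hq =>
    (Q_congr hl0 hl1 hsymm a hp hq).trans (Q_swap V a _ _)
  simp only [Phi, mem_ofPred_eq]
  constructor
  · rintro ⟨hp, hq, h⟩
    exact ⟨hq, hp, by rw [hsymm q hq p hp, h, hQ hp hq]⟩
  · rintro ⟨hq, hp, h⟩
    exact ⟨hp, hq, by rw [hsymm p hp q hq, h, hQ hp hq]⟩

end Bellman

theorem regions_mirror_general
    (l0 l1 β Rl Rh Cl Ch : ℝ)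
    (hl0 : l0 ∈ Icc (0:ℝ) 1) (hl1 : l1 ∈ Icc (0:ℝ) 1)
    (hβ0 : 0 ≤ β) (hβ1 : β < 1)
    (V : ℝ → ℝ → ℝ) (hVbdd : BddOnSq V)
    (hVfix : IsFix l0 l1 β Rl Rh Cl Ch V)
    (p1 p2 : ℝ) :
    (p1, p2) ∈ Phi l0 l1 β Rl Rh Cl Ch V PAct.B1 ↔ (p2, p1) ∈ Phi l0 l1 β Rl Rh Cl Ch V PAct.B2 := by
  have hsymm : ∀ x ∈ Icc (0:ℝ) 1, ∀ y ∈ Icc (0:ℝ) 1, V x y = V y x :=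
    hVfix.eq_of_bddOnSq hβ0 hβ1 hl0 hl1 hVfix.swap hVbdd hVbdd.swap
  exact mem_Phi_swap_iff hl0 hl1 hsymm PAct.B1 p1 p2

/-- Theorem 2, part 2: `Φ_B1` and `Φ_B2` are mirror images w.r.t. the line `p1 = p2`. -/
theorem regions_mirror
    (l0 l1 β Rl Rh Cl Ch : ℝ)
    (hl0 : l0 ∈ Icc (0:ℝ) 1) (hl1 : l1 ∈ Icc (0:ℝ) 1) (hl01 : l0 < l1)
    (hβ0 : 0 ≤ β) (hβ1 : β < 1)
    (hRl : 0 < Rl) (hRh : 0 < Rh) (hCl : 0 < Cl) (hCh : 0 < Ch)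
    (hRlh : Rl < Rh) (hRh2 : Rh < 2 * Rl)
    (hClh : Cl < Ch) (hCh2 : Ch < 2 * Cl)
    (hRhCh : Ch < Rh) (hRlCl : Cl < Rl)
    (V : ℝ → ℝ → ℝ) (hVbdd : BddOnSq V)
    (hVfix : IsFix l0 l1 β Rl Rh Cl Ch V)
    (p1 p2 : ℝ) :
    (p1, p2) ∈ Phi l0 l1 β Rl Rh Cl Ch V PAct.B1 ↔ (p2, p1) ∈ Phi l0 l1 β Rl Rh Cl Ch V PAct.B2 :=
  regions_mirror_general l0 l1 β Rl Rh Cl Ch hl0 hl1 hβ0 hβ1 V hVbdd hVfix p1 p2
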